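/- Let A be a 5-dimensional non-split nilpotent left Leibniz algebra over ℂ with dim A² = 3 and dim Leib(A) = 1. Then dim A³ equals 1 or 2. -/

import Mathlib

/-!
If `A³ = 0`, then `A²` is central (the left Leibniz identity moves `[[s,t],a]` into `A³`), so the
bracket factors through `A/A²`, which is spanned by two vectors `x, y`. As `[a,b] + [b,a] ∈ Leib(A)`,
this forces `A² ⊆ Leib(A) + span{[x,y]}`, of dimension at most `2 < 3`. On the other hand nilpotency
makes `A³` a proper subspace of `A² ≠ 0`.
-/

/-- The left Leibniz identity for a bilinear bracket:
`[a,[b,c]] = [[a,b],c] + [b,[a,c]]`. -/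
def IsLeibnizBracket {K A : Type*} [CommRing K] [AddCommGroup A] [Module K A]
    (br : A →ₗ[K] A →ₗ[K] A) : Prop :=
  ∀ a b c : A, br a (br b c) = br (br a b) c + br b (br a c)

/-- The span of all brackets `[s,t]` with `s ∈ S`, `t ∈ T`. -/
def bracketSpan {K A : Type*} [CommRing K] [AddCommGroup A] [Module K A]
    (br : A →ₗ[K] A →ₗ[K] A) (S T : Submodule K A) : Submodule K A :=
  Submodule.span K {x | ∃ s ∈ S, ∃ t ∈ T, br s t = x}

/-- Lower central series: `lcs br n = A^(n+1)`, i.e. `lcs br 0 = A¹ = A` and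
`lcs br (n+1) = [A, lcs br n]`. -/
def lcs {K A : Type*} [CommRing K] [AddCommGroup A] [Module K A]
    (br : A →ₗ[K] A →ₗ[K] A) : ℕ → Submodule K A
  | 0 => ⊤
  | n + 1 => bracketSpan br ⊤ (lcs br n)

/-- `Leib(A)`: the span of all squares `[a,a]`. -/
def leibIdeal {K A : Type*} [CommRing K] [AddCommGroup A] [Module K A]
    (br : A →ₗ[K] A →ₗ[K] A) : Submodule K A :=
  Submodule.span K {x | ∃ a : A, br a a = x}

/-- The center `Z(A) = {x : [a,x] = 0 = [x,a] for all a}`. -/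
def leibnizCenter {K A : Type*} [CommRing K] [AddCommGroup A] [Module K A]
    (br : A →ₗ[K] A →ₗ[K] A) : Submodule K A where
  carrier := {x | ∀ a : A, br a x = 0 ∧ br x a = 0}
  add_mem' := by
    intro x y hx hy a
    constructor <;>
      simp [map_add, LinearMap.add_apply, (hx a).1, (hx a).2, (hy a).1, (hy a).2]
  zero_mem' := by
    intro a
    constructor <;> simp
  smul_mem' := by
    intro c x hx a
    constructor <;>
      simp [map_smul, LinearMap.smul_apply, (hx a).1, (hx a).2]

/-- Two-sided ideal of a Leibniz algebra. -/
def IsLeibnizIdeal {K A : Type*} [CommRing K] [AddCommGroup A] [Module K A]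
    (br : A →ₗ[K] A →ₗ[K] A) (I : Submodule K A) : Prop :=
  ∀ a : A, ∀ x ∈ I, br a x ∈ I ∧ br x a ∈ I

open Module Submodule

section Leibniz

variable {K A : Type*} [CommRing K] [AddCommGroup A] [Module K A] {br : A →ₗ[K] A →ₗ[K] A}

lemma bracket_mem_lcs_succ {n : ℕ} (a : A) {x : A} (hx : x ∈ lcs br n) :
    br a x ∈ lcs br (n + 1) :=
  subset_span ⟨a, trivial, x, hx, rfl⟩

lemma bracket_mem_lcs_one (a b : A) : br a b ∈ lcs br 1 :=
  bracket_mem_lcs_succ a (mem_top : b ∈ lcs br 0)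

lemma lcs_succ_le (n : ℕ) : lcs br (n + 1) ≤ lcs br n := by
  induction n with
  | zero => exact le_top
  | succ n ih =>
    exact span_mono <| by
      rintro _ ⟨a, -, x, hx, rfl⟩
      exact ⟨a, trivial, x, ih hx, rfl⟩

lemma lcs_antitone : Antitone (lcs br) :=
  antitone_nat_of_succ_le lcs_succ_le

lemma lcs_succ_lt_of_ne_bot (hnil : ∃ m, lcs br m = ⊥) {n : ℕ} (hn : lcs br n ≠ ⊥) :
    lcs br (n + 1) < lcs br n := by
  refine (lcs_succ_le n).lt_of_ne fun heq => hn ?_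
  have hstable : ∀ k, lcs br (n + k) = lcs br n := by
    intro k
    induction k with
    | zero => rfl
    | succ k ih =>
      change bracketSpan br ⊤ (lcs br (n + k)) = lcs br n
      rw [ih]
      exact heq
  obtain ⟨m, hm⟩ := hnil
  rw [← hstable m, eq_bot_iff, ← hm]
  exact lcs_antitone (Nat.le_add_left m n)

lemma lcs_one_le_leibnizCenter (hbr : IsLeibnizBracket br) (h : lcs br 2 = ⊥) :
    lcs br 1 ≤ leibnizCenter br := by
  have hzero : ∀ a b c : A, br a (br b c) = 0 := fun a b c => by
    simpa [h] using bracket_mem_lcs_succ a (bracket_mem_lcs_one (br := br) b c)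
  refine span_le.2 ?_
  rintro _ ⟨s, -, t, -, rfl⟩ a
  refine ⟨hzero a s t, ?_⟩
  have hid := hbr s t a
  rw [hzero s t a, hzero t s a, add_zero] at hid
  exact hid.symm

lemma bracket_add_bracket_swap_mem_leibIdeal (a b : A) : br a b + br b a ∈ leibIdeal br := by
  have hpolar : br a b + br b a = br (a + b) (a + b) - br a a - br b b := by
    simp only [map_add, LinearMap.add_apply]
    abel
  rw [hpolar]
  exact sub_mem (sub_mem (subset_span ⟨_, rfl⟩) (subset_span ⟨_, rfl⟩)) (subset_span ⟨_, rfl⟩)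

lemma bracket_mem_leibIdeal_sup_span_of_mem_span_pair {x y a b : A}
    (ha : a ∈ span K {x, y}) (hb : b ∈ span K {x, y}) :
    br a b ∈ leibIdeal br ⊔ K ∙ br x y := by
  set T := leibIdeal br ⊔ K ∙ br x y
  have hsq : ∀ z, br z z ∈ T := fun z => mem_sup_left (subset_span ⟨z, rfl⟩)
  have hxy : br x y ∈ T := mem_sup_right (mem_span_singleton_self _)
  have hyx : br y x ∈ T := by
    simpa using sub_mem (mem_sup_left (bracket_add_bracket_swap_mem_leibIdeal x y)) hxy
  have hgen : Set.image2 (fun u v => br u v) {x, y} {x, y} ⊆ T := by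
    rintro _ ⟨u, hu, v, hv, rfl⟩
    rcases hu with rfl | rfl <;> rcases hv with rfl | rfl <;> simp_all
  have hab := apply_mem_map₂ br ha hb
  rw [map₂_span_span] at hab
  exact span_le.2 hgen hab

end Leibniz

lemma exists_sup_span_pair_eq_top {K V : Type*} [Field K] [AddCommGroup V] [Module K V]
    [FiniteDimensional K V] (p : Submodule K V) (h : finrank K (V ⧸ p) = 2) :
    ∃ x y : V, p ⊔ span K {x, y} = ⊤ := by
  let b := finBasisOfFinrankEq K _ h
  obtain ⟨x, hx⟩ := p.mkQ_surjective (b 0)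
  obtain ⟨y, hy⟩ := p.mkQ_surjective (b 1)
  refine ⟨x, y, (map_mkQ_eq_top p _).1 ?_⟩
  rw [map_span, Set.image_pair, hx, hy, ← b.span_eq]
  congr 1
  ext v
  simp [Fin.exists_fin_two, eq_comm]

lemma finrank_lcs_one_le_of_lcs_two_eq_bot {K A : Type*} [Field K] [AddCommGroup A] [Module K A]
    [FiniteDimensional K A] {br : A →ₗ[K] A →ₗ[K] A} (hbr : IsLeibnizBracket br)
    (h : lcs br 2 = ⊥) {x y : A} (hxy : lcs br 1 ⊔ span K {x, y} = ⊤) :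
    finrank K (lcs br 1) ≤ finrank K (leibIdeal br) + 1 := by
  have hcentral := lcs_one_le_leibnizCenter hbr h
  have hle : lcs br 1 ≤ leibIdeal br ⊔ K ∙ br x y := by
    refine span_le.2 ?_
    rintro _ ⟨a, -, b, -, rfl⟩
    obtain ⟨u, hu, a', ha', rfl⟩ := mem_sup.1 (hxy ▸ mem_top : a ∈ lcs br 1 ⊔ span K {x, y})
    obtain ⟨v, hv, b', hb', rfl⟩ := mem_sup.1 (hxy ▸ mem_top : b ∈ lcs br 1 ⊔ span K {x, y})
    have hbr_eq : br (u + a') (v + b') = br a' b' := by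
      simp [(hcentral hu _).2, (hcentral hv _).1]
    rw [hbr_eq]
    exact bracket_mem_leibIdeal_sup_span_of_mem_span_pair ha' hb'
  calc finrank K (lcs br 1)
      ≤ finrank K ↥(leibIdeal br ⊔ K ∙ br x y) := finrank_mono hle
    _ ≤ finrank K (leibIdeal br) + finrank K (K ∙ br x y) :=
        finrank_add_le_finrank_add_finrank _ _
    _ ≤ finrank K (leibIdeal br) + 1 :=
        Nat.add_le_add_left ((finrank_span_le_card {br x y}).trans (by simp)) _

theorem dim_third_lcs_eq_one_or_two_general
    {A : Type*} [AddCommGroup A] [Module ℂ A] [FiniteDimensional ℂ A]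
    (br : A →ₗ[ℂ] A →ₗ[ℂ] A) (hbr : IsLeibnizBracket br)
    (hnil : ∃ m : ℕ, lcs br m = ⊥)
    (hdim : Module.finrank ℂ A = 5)
    (hA2 : Module.finrank ℂ ↥(lcs br 1) = 3)
    (hleib : Module.finrank ℂ ↥(leibIdeal br) = 1) :
    Module.finrank ℂ ↥(lcs br 2) = 1 ∨ Module.finrank ℂ ↥(lcs br 2) = 2 := by
  have hA2_ne_bot : lcs br 1 ≠ ⊥ := fun h => by rw [h, finrank_bot] at hA2; omega
  have hA3_lt : finrank ℂ (lcs br 2) < finrank ℂ (lcs br 1) :=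
    finrank_lt_finrank_of_lt (lcs_succ_lt_of_ne_bot hnil hA2_ne_bot)
  have hA3_ne_bot : lcs br 2 ≠ ⊥ := by
    intro h
    have hquot : finrank ℂ (A ⧸ lcs br 1) = 2 := by
      have := (lcs br 1).finrank_quotient_add_finrank
      omega
    obtain ⟨x, y, hxy⟩ := exists_sup_span_pair_eq_top _ hquot
    have := finrank_lcs_one_le_of_lcs_two_eq_bot hbr h hxy
    omega
  have hA3_pos : finrank ℂ (lcs br 2) ≠ 0 := fun h => hA3_ne_bot (finrank_eq_zero.1 h)
  omega

/-- If `A` is a 5-dimensional non-split nilpotent left Leibniz algebra over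
`ℂ` with `dim A² = 3` and `dim Leib(A) = 1`, then `dim A³` is `1` or `2`. -/
theorem dim_third_lcs_eq_one_or_two
    {A : Type*} [AddCommGroup A] [Module ℂ A] [FiniteDimensional ℂ A]
    (br : A →ₗ[ℂ] A →ₗ[ℂ] A) (hbr : IsLeibnizBracket br)
    (hns : ¬ ∃ I J : Submodule ℂ A, IsLeibnizIdeal br I ∧ IsLeibnizIdeal br J ∧
      I ≠ ⊥ ∧ J ≠ ⊥ ∧ IsCompl I J)
    (hnil : ∃ m : ℕ, lcs br m = ⊥)
    (hdim : Module.finrank ℂ A = 5)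
    (hA2 : Module.finrank ℂ ↥(lcs br 1) = 3)
    (hleib : Module.finrank ℂ ↥(leibIdeal br) = 1) :
    Module.finrank ℂ ↥(lcs br 2) = 1 ∨ Module.finrank ℂ ↥(lcs br 2) = 2 :=
  dim_third_lcs_eq_one_or_two_general br hbr hnil hdim hA2 hleib
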